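/- arXiv:2601.09472 — 5 statements merged into one kernel-verified Lean document; each statement's English description precedes it below -/
import Mathlib

section
/- For 0 < q < 1 and integer ℓ ≥ 2, we have ∑_{j=1}^{∞} j q^j/(1-q^j) < q/(1-q)^3 + ∑_{j=1}^{ℓ-1} j q^j (q^j - q) / ((1-q^j)(1-q)). -/
/-!
Put `a j = (j+1) q^(j+1) / (1 - q^(j+1))` and `b j = (j+1) q^(j+1) / (1 - q)`. Since
`1 - q ≤ 1 - q^(j+1)`, we have `a j ≤ b j`, with strict inequality for `j ≥ 1`, and
`∑ b j = q / (1 - q)^3` by differentiating the geometric series. Hence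
`∑ a j = q / (1 - q)^3 + ∑ (a j - b j)`, and dropping the strictly negative tail `j ≥ ℓ - 1`
of the last series leaves exactly the finite sum of the statement.
-/

open Finset

theorem tsum_lt_sum_range_of_nonpos {α : Type*} [AddCommGroup α] [PartialOrder α]
    [IsOrderedAddMonoid α] [TopologicalSpace α] [IsTopologicalAddGroup α]
    [OrderClosedTopology α]
    {f : ℕ → α} {m : ℕ} (hf : Summable f) (hle : ∀ j, m ≤ j → f j ≤ 0) (hlt : f m < 0) :
    ∑' j, f j < ∑ j ∈ range m, f j := by
  have htail : ∑' j, f (j + m) < 0 :=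
    hasSum_lt (i := 0) (fun j => hle _ (Nat.le_add_left m j)) (by simpa using hlt)
      ((summable_nat_add_iff m).mpr hf).hasSum hasSum_zero
  rw [← hf.sum_add_tsum_nat_add m]
  exact add_lt_of_neg_right _ htail

theorem hasSum_succ_mul_pow_succ_div_one_sub {𝕜 : Type*} [NormedField 𝕜] {q : 𝕜}
    (hq : ‖q‖ < 1) :
    HasSum (fun j : ℕ => ((j : 𝕜) + 1) * q ^ (j + 1) / (1 - q)) (q / (1 - q) ^ 3) := by
  have h := (hasSum_nat_add_iff' (f := fun n : ℕ => (n : 𝕜) * q ^ n) 1).mpr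
    (hasSum_coe_mul_geometric_of_norm_lt_one hq)
  simp only [Nat.cast_add, Nat.cast_one, range_one, sum_singleton, Nat.cast_zero, zero_mul,
    sub_zero] at h
  rw [pow_succ, ← div_div]
  exact h.div_const (1 - q)

theorem one_sub_le_one_sub_pow_succ {q : ℝ} (hq0 : 0 ≤ q) (hq1 : q ≤ 1) (j : ℕ) :
    1 - q ≤ 1 - q ^ (j + 1) := by
  have := pow_le_pow_of_le_one hq0 hq1 (Nat.le_add_left 1 j)
  rw [pow_one] at this
  linarith

theorem one_sub_lt_one_sub_pow_succ {q : ℝ} (hq0 : 0 < q) (hq1 : q < 1) {j : ℕ} (hj : 1 ≤ j) :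
    1 - q < 1 - q ^ (j + 1) := by
  have := pow_lt_pow_right_of_lt_one₀ hq0 hq1 (show 1 < j + 1 by omega)
  rw [pow_one] at this
  linarith

theorem tsum_lt_aux (q : ℝ) (hq0 : 0 < q) (hq1 : q < 1) (ℓ : ℕ) (hℓ : 2 ≤ ℓ) :
    (∑' j : ℕ, ((j : ℝ) + 1) * q ^ (j + 1) / (1 - q ^ (j + 1))) <
      q / (1 - q) ^ 3 +
        ∑ j ∈ Finset.range (ℓ - 1),
          ((j : ℝ) + 1) * q ^ (j + 1) * (q ^ (j + 1) - q) / ((1 - q ^ (j + 1)) * (1 - q)) := by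
  set a : ℕ → ℝ := fun j => ((j : ℝ) + 1) * q ^ (j + 1) / (1 - q ^ (j + 1))
  set b : ℕ → ℝ := fun j => ((j : ℝ) + 1) * q ^ (j + 1) / (1 - q)
  have hb : HasSum b (q / (1 - q) ^ 3) :=
    hasSum_succ_mul_pow_succ_div_one_sub (by rwa [Real.norm_eq_abs, abs_of_pos hq0])
  have hq : 0 < 1 - q := sub_pos.mpr hq1
  have hqj (j : ℕ) : 1 - q ≤ 1 - q ^ (j + 1) := one_sub_le_one_sub_pow_succ hq0.le hq1.le j
  have hab (j : ℕ) : a j ≤ b j := div_le_div_of_nonneg_left (by positivity) hq (hqj j)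
  have ha : Summable a :=
    .of_nonneg_of_le (fun j => div_nonneg (by positivity) (hq.trans_le (hqj j)).le) hab hb.summable
  have hab_lt : a (ℓ - 1) < b (ℓ - 1) :=
    div_lt_div_of_pos_left (by positivity) hq (one_sub_lt_one_sub_pow_succ hq0 hq1 (by omega))
  have hsub (j : ℕ) : a j - b j =
      ((j : ℝ) + 1) * q ^ (j + 1) * (q ^ (j + 1) - q) / ((1 - q ^ (j + 1)) * (1 - q)) := by
    rw [div_sub_div _ _ (hq.trans_le (hqj j)).ne' hq.ne']
    ring
  calc ∑' j, a j = q / (1 - q) ^ 3 + ∑' j, (a j - b j) := by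
        rw [ha.tsum_sub hb.summable, hb.tsum_eq]; ring
    _ < q / (1 - q) ^ 3 + ∑ j ∈ range (ℓ - 1), (a j - b j) :=
        add_lt_add_right (tsum_lt_sum_range_of_nonpos (ha.sub hb.summable)
          (fun j _ => sub_nonpos.mpr (hab j)) (sub_neg.mpr hab_lt)) _
    _ = _ := by simp_rw [hsub]
end

section
/- For every even n ≥ 4, setting k = (n+2)/2 (so that n+1-2k+j = j-1), we have ∑_{j=0}^{3} (j-1) C(n-j, k-j) p(j) = C(n,k) · (n+14)/(4(n-1)), and in particular this sum is positive. -/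
/-!
Write `n = 2m + 4`, `k = m + 3`. The `j = 1` term vanishes and the others involve
`A = C(2m+4, m+3)`, `B = C(2m+2, m+1)` and `C(2m+1, m) = B / 2`, so the sum is `5B - A`;
two absorption steps give `A (m + 3) = 2 (2m + 3) B`, which turns `5B - A` into the closed form.
The needed values of `p` are computed by identifying partitions with their multiplicity vectors,
which range over a finite type small enough to be counted by evaluation.
-/

/-- The partition function: number of partitions of `n`, with `p 0 = 1`. -/
def partitionFn (n : ℕ) : ℕ := Fintype.card (Nat.Partition n)

namespace Nat.Partition

variable {n : ℕ}

def multisetOfCounts (f : Fin n → ℕ) : Multiset ℕ :=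
  ∑ i, Multiset.replicate (f i) ((i : ℕ) + 1)

theorem count_multisetOfCounts (f : Fin n → ℕ) (j : Fin n) :
    (multisetOfCounts f).count ((j : ℕ) + 1) = f j := by
  simp [multisetOfCounts, Multiset.count_sum', Multiset.count_replicate, Fin.val_inj]

theorem sum_multisetOfCounts (f : Fin n → ℕ) :
    (multisetOfCounts f).sum = ∑ i : Fin n, ((i : ℕ) + 1) * f i := by
  simp [multisetOfCounts, Multiset.sum_sum, mul_comm]

theorem exists_of_mem_multisetOfCounts {f : Fin n → ℕ} {a : ℕ}
    (ha : a ∈ multisetOfCounts f) :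
    ∃ j : Fin n, (j : ℕ) + 1 = a := by
  simp only [multisetOfCounts, Multiset.mem_sum, Multiset.mem_replicate] at ha
  obtain ⟨j, -, -, rfl⟩ := ha
  exact ⟨j, rfl⟩

theorem multisetOfCounts_count {s : Multiset ℕ} (hs : ∀ x ∈ s, 0 < x ∧ x ≤ n) :
    multisetOfCounts (fun i : Fin n => s.count ((i : ℕ) + 1)) = s := by
  ext a
  by_cases ha : ∃ j : Fin n, (j : ℕ) + 1 = a
  · obtain ⟨j, rfl⟩ := ha
    exact count_multisetOfCounts _ j
  · have hs' : a ∉ s := fun h => ha ⟨⟨a - 1, by grind⟩, by grind⟩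
    have hm : a ∉ multisetOfCounts (fun i : Fin n => s.count ((i : ℕ) + 1)) :=
      fun h => ha (exists_of_mem_multisetOfCounts h)
    rw [Multiset.count_eq_zero.mpr hs', Multiset.count_eq_zero.mpr hm]

-- `f i` is the multiplicity of the part `i + 1`.
abbrev Counts (n : ℕ) : Type :=
  {f : Fin n → Fin (n + 1) // ∑ i : Fin n, ((i : ℕ) + 1) * (f i : ℕ) = n}

def ofCounts (f : Counts n) : Nat.Partition n where
  parts := multisetOfCounts fun i => f.1 i
  parts_pos ha := by
    obtain ⟨j, rfl⟩ := exists_of_mem_multisetOfCounts ha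
    exact j.val.succ_pos
  parts_sum := (sum_multisetOfCounts _).trans f.2

theorem ofCounts_injective : Function.Injective (ofCounts (n := n)) := by
  intro f g h
  ext j : 2
  have := congrArg (fun p : Nat.Partition n => p.parts.count ((j : ℕ) + 1)) h
  simpa only [ofCounts, count_multisetOfCounts, Fin.val_inj] using this

theorem ofCounts_surjective : Function.Surjective (ofCounts (n := n)) := by
  intro p
  have hs : ∀ x ∈ p.parts, 0 < x ∧ x ≤ n := fun x hx =>
    ⟨p.parts_pos hx, p.parts_sum ▸ Multiset.le_sum_of_mem hx⟩
  have hsum := p.parts_sum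
  rw [← multisetOfCounts_count hs, sum_multisetOfCounts] at hsum
  have hle (i : Fin n) : p.parts.count ((i : ℕ) + 1) < n + 1 := by
    have := Finset.single_le_sum
      (f := fun i : Fin n => ((i : ℕ) + 1) * p.parts.count ((i : ℕ) + 1))
      (fun _ _ => Nat.zero_le _) (Finset.mem_univ i)
    nlinarith
  refine ⟨⟨fun i => ⟨p.parts.count ((i : ℕ) + 1), hle i⟩, hsum⟩, ?_⟩
  exact Nat.Partition.ext (multisetOfCounts_count hs)

theorem card_eq_card_counts (n : ℕ) : Fintype.card (Nat.Partition n) = Fintype.card (Counts n) :=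
  (Fintype.card_of_bijective ⟨ofCounts_injective, ofCounts_surjective⟩).symm

end Nat.Partition

theorem partitionFn_zero : partitionFn 0 = 1 := by
  rw [partitionFn, Nat.Partition.card_eq_card_counts]; decide

theorem partitionFn_two : partitionFn 2 = 2 := by
  rw [partitionFn, Nat.Partition.card_eq_card_counts]; decide

theorem partitionFn_three : partitionFn 3 = 3 := by
  rw [partitionFn, Nat.Partition.card_eq_card_counts]; decide

theorem choose_two_mul_add_two (m : ℕ) :
    (2 * m + 2).choose (m + 1) = 2 * (2 * m + 1).choose m := by
  rw [Nat.choose_succ_succ, Nat.choose_symm_half]; ring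

theorem choose_two_mul_add_four_mul (m : ℕ) :
    (2 * m + 4).choose (m + 3) * (m + 3) = 2 * (2 * m + 3) * (2 * m + 2).choose (m + 1) := by
  have h₁ : (2 * m + 4) * (2 * m + 3).choose (m + 2) = (2 * m + 4).choose (m + 3) * (m + 3) :=
    Nat.add_one_mul_choose_eq _ _
  have h₂ : (2 * m + 3) * (2 * m + 2).choose (m + 1) = (2 * m + 3).choose (m + 2) * (m + 2) :=
    Nat.add_one_mul_choose_eq _ _
  refine Nat.eq_of_mul_eq_mul_right (show 0 < m + 2 by omega) ?_
  calc (2 * m + 4).choose (m + 3) * (m + 3) * (m + 2)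
      = (2 * m + 4) * (2 * m + 3).choose (m + 2) * (m + 2) := by rw [h₁]
    _ = 2 * ((2 * m + 3) * (2 * m + 2).choose (m + 1)) * (m + 2) := by rw [h₂]; ring
    _ = 2 * (2 * m + 3) * (2 * m + 2).choose (m + 1) * (m + 2) := by ring

theorem sum_range_four_eq (m : ℕ) :
    ∑ j ∈ Finset.range 4,
        ((j : ℝ) - 1) * (Nat.choose (2 * m + 4 - j) (m + 3 - j)) * partitionFn j =
      (2 * m + 4).choose (m + 3) * (2 * (m : ℝ) + 18) / (4 * (2 * m + 3)) := by
  simp only [Finset.sum_range_succ, Finset.sum_range_zero, partitionFn_zero, partitionFn_two,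
    partitionFn_three]
  rw [show 2 * m + 4 - 2 = 2 * m + 2 by omega, show m + 3 - 2 = m + 1 by omega,
    show 2 * m + 4 - 3 = 2 * m + 1 by omega, show m + 3 - 3 = m by omega]
  have hA : ((2 * m + 4).choose (m + 3) : ℝ) * (m + 3) =
      2 * (2 * m + 3) * (2 * m + 2).choose (m + 1) := by
    exact_mod_cast choose_two_mul_add_four_mul m
  have hB : ((2 * m + 2).choose (m + 1) : ℝ) = 2 * (2 * m + 1).choose m := by
    exact_mod_cast choose_two_mul_add_two m
  rw [eq_div_iff (by positivity)]
  push_cast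
  linear_combination (-12 * (2 * (m : ℝ) + 3)) * hB - 10 * hA

theorem sum_first_four_terms_general (n k : ℕ) (hn : 4 ≤ n) (hk : 2 * k = n + 2) :
    (∑ j ∈ Finset.range 4,
        ((j : ℝ) - 1) * (Nat.choose (n - j) (k - j)) * partitionFn j) =
      (Nat.choose n k : ℝ) * ((n : ℝ) + 14) / (4 * ((n : ℝ) - 1)) ∧
    0 < ∑ j ∈ Finset.range 4,
        ((j : ℝ) - 1) * (Nat.choose (n - j) (k - j)) * partitionFn j := by
  obtain ⟨m, rfl⟩ : ∃ m, k = m + 3 := ⟨k - 3, by omega⟩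
  obtain rfl : n = 2 * m + 4 := by omega
  have hpos : 0 < (2 * m + 4).choose (m + 3) := Nat.choose_pos (by omega)
  have key := sum_range_four_eq m
  refine ⟨key.trans ?_, key ▸ by positivity⟩
  congr 1 <;> push_cast <;> ring

theorem sum_first_four_terms (n k : ℕ) (hn : 4 ≤ n) (hev : Even n) (hk : 2 * k = n + 2) :
    (∑ j ∈ Finset.range 4,
        ((j : ℝ) - 1) * (Nat.choose (n - j) (k - j)) * partitionFn j) =
      (Nat.choose n k : ℝ) * ((n : ℝ) + 14) / (4 * ((n : ℝ) - 1)) ∧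
    0 < ∑ j ∈ Finset.range 4,
        ((j : ℝ) - 1) * (Nat.choose (n - j) (k - j)) * partitionFn j :=
  sum_first_four_terms_general n k hn hk
end

section
/- For 1 ≤ k ≤ n-1, p(n,k) < C(n,k) · ∏_{j=1}^{∞} 1/(1 - (k/n)^j). -/
/-- `P n k = ∑_{j=0}^k C(n-j, k-j) p(j)`. -/
def P (n k : ℕ) : ℕ :=
  ∑ j ∈ Finset.range (k + 1), Nat.choose (n - j) (k - j) * partitionFn j

/-!
Since `C(n-j, k-j) = C(n,k) ∏_{i<j} (k-i)/(n-i) ≤ C(n,k) (k/n)^j`, with `x = k/n` we get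
`P n k ≤ C(n,k) ∑_{j ≤ k} p(j) x^j`. Sending a partition of `j < m` to its vector of part
multiplicities injects the partitions into the monomials of `∏_{i<m} ∑_{c<m} x^{(i+1)c}`, whence
`∑_{j<m} p(j) x^j ≤ ∏_{i<m} (1 - x^{i+1})⁻¹`. Since `x > 0`, every further factor of the infinite
product exceeds `1`, which makes the final inequality strict.
-/

open Finset

theorem choose_sub_mul_pow_le_choose_mul_pow {n k j : ℕ} (hjk : j ≤ k) (hkn : k ≤ n) :
    (n - j).choose (k - j) * n ^ j ≤ n.choose k * k ^ j := by
  induction j with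
  | zero => simp
  | succ j ih =>
    have hstep : (n - j) * (n - (j + 1)).choose (k - (j + 1)) =
        (n - j).choose (k - j) * (k - j) := by
      rw [show n - j = n - (j + 1) + 1 by omega, show k - j = k - (j + 1) + 1 by omega,
        Nat.add_one_mul_choose_eq]
    have hratio : (k - j) * n ≤ k * (n - j) := by
      rw [Nat.sub_mul, Nat.mul_sub, mul_comm j n]
      exact Nat.sub_le_sub_left (Nat.mul_le_mul_right j hkn) _
    refine Nat.le_of_mul_le_mul_left ?_ (show 0 < n - j by omega)
    calc (n - j) * ((n - (j + 1)).choose (k - (j + 1)) * n ^ (j + 1))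
        = (n - j).choose (k - j) * n ^ j * ((k - j) * n) := by rw [← mul_assoc, hstep]; ring
      _ ≤ n.choose k * k ^ j * (k * (n - j)) := Nat.mul_le_mul (ih (by omega)) hratio
      _ = (n - j) * (n.choose k * k ^ (j + 1)) := by ring

theorem choose_sub_le_choose_mul_div_pow {n k j : ℕ} (hjk : j ≤ k) (hkn : k ≤ n) :
    ((n - j).choose (k - j) : ℝ) ≤ n.choose k * ((k : ℝ) / n) ^ j := by
  obtain rfl | hj := j.eq_zero_or_pos
  · simp
  rw [div_pow, ← mul_div_assoc, le_div_iff₀ (by positivity [show 0 < n by omega])]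
  exact_mod_cast choose_sub_mul_pow_le_choose_mul_pow hjk hkn

theorem P_le_choose_mul_sum {n k : ℕ} (hkn : k ≤ n) :
    (P n k : ℝ) ≤ n.choose k * ∑ j ∈ range (k + 1), (partitionFn j : ℝ) * ((k : ℝ) / n) ^ j := by
  rw [P, Nat.cast_sum, mul_sum]
  refine sum_le_sum fun j hj => ?_
  have hjk : j ≤ k := Nat.lt_succ_iff.mp (mem_range.mp hj)
  calc ((n - j).choose (k - j) * partitionFn j : ℕ)
      ≤ (n.choose k * ((k : ℝ) / n) ^ j) * partitionFn j := by
        push_cast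
        gcongr
        exact choose_sub_le_choose_mul_div_pow hjk hkn
    _ = _ := by ring

namespace Nat.Partition

def partCounts {n : ℕ} (q : n.Partition) (m : ℕ) : Fin m → ℕ :=
  fun i => q.parts.count ((i : ℕ) + 1)

variable {n m : ℕ}

theorem sum_succ_mul_partCounts (q : n.Partition) (hnm : n ≤ m) :
    ∑ i : Fin m, ((i : ℕ) + 1) * q.partCounts m i = n := by
  have hsub : q.parts.toFinset ⊆ range (m + 1) := fun v hv =>
    mem_range.2 (Nat.lt_succ_of_le ((le_of_mem_parts (Multiset.mem_toFinset.1 hv)).trans hnm))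
  calc ∑ i : Fin m, ((i : ℕ) + 1) * q.parts.count ((i : ℕ) + 1)
      = ∑ i ∈ range m, (i + 1) * q.parts.count (i + 1) :=
        Fin.sum_univ_eq_sum_range (fun i => (i + 1) * q.parts.count (i + 1)) m
    _ = ∑ v ∈ range (m + 1), v * q.parts.count v := by simp [sum_range_succ']
    _ = ∑ v ∈ q.parts.toFinset, v * q.parts.count v :=
        (sum_subset hsub fun v _ hv => by simp [Multiset.count_eq_zero.2 (by simpa using hv)]).symm
    _ = n := by
        conv_rhs => rw [← q.parts_sum, sum_multiset_count]
        simp [mul_comm]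

theorem partCounts_lt (q : n.Partition) (hnm : n < m) (i : Fin m) : q.partCounts m i < m :=
  calc q.parts.count ((i : ℕ) + 1) ≤ Multiset.card q.parts := Multiset.count_le_card _ _
    _ ≤ q.parts.sum := by simpa using Multiset.card_nsmul_le_sum fun _ h => q.parts_pos h
    _ < m := q.parts_sum.symm ▸ hnm

theorem partCounts_injective (hnm : n ≤ m) :
    Function.Injective fun q : n.Partition => q.partCounts m := by
  intro q q' h
  ext v
  obtain rfl | hv := v.eq_zero_or_pos
  · rw [Multiset.count_eq_zero.2 fun h => (q.parts_pos h).ne rfl,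
      Multiset.count_eq_zero.2 fun h => (q'.parts_pos h).ne rfl]
  obtain hvm | hvm := lt_or_ge m v
  · rw [Multiset.count_eq_zero.2 fun h => (le_of_mem_parts h).not_gt (by omega),
      Multiset.count_eq_zero.2 fun h => (le_of_mem_parts h).not_gt (by omega)]
  · simpa [partCounts, Nat.sub_add_cancel hv] using congrFun h ⟨v - 1, by omega⟩

end Nat.Partition

theorem prod_sum_pow_eq_sum_pow_sum_mul {R : Type*} [CommSemiring R] (x : R) (m N : ℕ) :
    ∏ i : Fin m, ∑ c ∈ range N, (x ^ ((i : ℕ) + 1)) ^ c =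
      ∑ c ∈ Fintype.piFinset fun _ : Fin m => range N, x ^ ∑ i : Fin m, ((i : ℕ) + 1) * c i := by
  rw [prod_univ_sum]
  simp_rw [← pow_mul, prod_pow_eq_pow_sum]

theorem sum_pow_le_inv_one_sub {x : ℝ} (hx0 : 0 ≤ x) (hx1 : x < 1) (N : ℕ) :
    ∑ c ∈ range N, x ^ c ≤ (1 - x)⁻¹ :=
  ((summable_geometric_of_lt_one hx0 hx1).sum_le_tsum _ fun c _ => pow_nonneg hx0 c).trans_eq
    (tsum_geometric_of_lt_one hx0 hx1)

theorem sum_partitionFn_mul_pow_le_prod {x : ℝ} (hx0 : 0 ≤ x) (hx1 : x < 1) (m : ℕ) :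
    ∑ j ∈ range m, (partitionFn j : ℝ) * x ^ j ≤ ∏ i ∈ range m, (1 - x ^ (i + 1))⁻¹ := by
  set T := Fintype.piFinset fun _ : Fin m => range m
  set weight : (Fin m → ℕ) → ℕ := fun c => ∑ i : Fin m, ((i : ℕ) + 1) * c i
  have hcard : ∀ j < m, partitionFn j ≤ #{c ∈ T | weight c = j} := fun j hj =>
    card_le_card_of_injOn (s := univ) (fun q : j.Partition => q.partCounts m)
      (fun q _ => mem_filter.2 ⟨Fintype.mem_piFinset.2 fun i => mem_range.2 (q.partCounts_lt hj i),
        q.sum_succ_mul_partCounts hj.le⟩)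
      (Nat.Partition.partCounts_injective hj.le).injOn
  calc ∑ j ∈ range m, (partitionFn j : ℝ) * x ^ j
      ≤ ∑ j ∈ range m, ∑ c ∈ T with weight c = j, x ^ weight c := by
        refine sum_le_sum fun j hj => ?_
        rw [sum_congr rfl fun c hc => by rw [(mem_filter.1 hc).2], sum_const, nsmul_eq_mul]
        gcongr
        exact_mod_cast hcard j (mem_range.1 hj)
    _ ≤ ∑ c ∈ T, x ^ weight c :=
        sum_fiberwise_le_sum_of_sum_fiber_nonneg fun _ _ => sum_nonneg fun c _ => pow_nonneg hx0 _
    _ = ∏ i : Fin m, ∑ c ∈ range m, (x ^ ((i : ℕ) + 1)) ^ c :=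
        (prod_sum_pow_eq_sum_pow_sum_mul x m m).symm
    _ ≤ ∏ i : Fin m, (1 - x ^ ((i : ℕ) + 1))⁻¹ :=
        prod_le_prod (fun _ _ => sum_nonneg fun _ _ => by positivity) fun i _ =>
          sum_pow_le_inv_one_sub (by positivity) (pow_lt_one₀ hx0 hx1 (i : ℕ).succ_ne_zero) m
    _ = ∏ i ∈ range m, (1 - x ^ (i + 1))⁻¹ :=
        Fin.prod_univ_eq_prod_range (fun i => (1 - x ^ (i + 1))⁻¹) m

theorem Multipliable.prod_le_tprod_of_one_le {ι R : Type*} [CommMonoidWithZero R] [Preorder R]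
    [ZeroLEOneClass R] [PosMulMono R] [TopologicalSpace R] [ClosedIciTopology R] {f : ι → R}
    (hf : Multipliable f) (h : ∀ i, 1 ≤ f i) (s : Finset ι) : ∏ i ∈ s, f i ≤ ∏' i, f i :=
  ge_of_tendsto hf.hasProd <| Filter.eventually_atTop.2 ⟨s, fun _ hst =>
    prod_le_prod_of_subset_of_one_le hst (fun i _ => zero_le_one.trans (h i)) fun i _ _ => h i⟩

theorem multipliable_inv_one_sub_pow {x : ℝ} (hx0 : 0 ≤ x) (hx1 : x < 1) :
    Multipliable fun j : ℕ => (1 - x ^ (j + 1))⁻¹ := by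
  have hpos : ∀ j : ℕ, 0 < 1 - x ^ (j + 1) := fun j =>
    sub_pos.2 (pow_lt_one₀ hx0 hx1 j.succ_ne_zero)
  have hsum : Summable fun j : ℕ => x ^ (j + 1) / (1 - x ^ (j + 1)) := by
    refine .of_nonneg_of_le (fun j => div_nonneg (by positivity) (hpos j).le) (fun j => ?_)
      (((summable_nat_add_iff 1).2 (summable_geometric_of_lt_one hx0 hx1)).div_const (1 - x))
    gcongr
    exact pow_le_of_le_one hx0 hx1.le j.succ_ne_zero
  refine (Real.multipliable_one_add_of_summable hsum).congr fun j => ?_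
  field_simp [(hpos j).ne']
  ring

theorem prod_range_lt_tprod_inv_one_sub_pow {x : ℝ} (hx0 : 0 < x) (hx1 : x < 1) (m : ℕ) :
    ∏ j ∈ range m, (1 - x ^ (j + 1))⁻¹ < ∏' j : ℕ, (1 - x ^ (j + 1))⁻¹ := by
  have hgt : ∀ j : ℕ, 1 < (1 - x ^ (j + 1))⁻¹ := fun j =>
    (one_lt_inv₀ (sub_pos.2 (pow_lt_one₀ hx0.le hx1 j.succ_ne_zero))).2
      (sub_lt_self 1 (pow_pos hx0 _))
  calc ∏ j ∈ range m, (1 - x ^ (j + 1))⁻¹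
      < ∏ j ∈ range (m + 1), (1 - x ^ (j + 1))⁻¹ := by
        rw [prod_range_succ]
        exact lt_mul_of_one_lt_right (prod_pos fun j _ => one_pos.trans (hgt j)) (hgt m)
    _ ≤ ∏' j : ℕ, (1 - x ^ (j + 1))⁻¹ :=
        (multipliable_inv_one_sub_pow hx0.le hx1).prod_le_tprod_of_one_le (fun j => (hgt j).le) _

theorem P_lt_choose_mul_tprod (n k : ℕ) (hk1 : 1 ≤ k) (hk2 : k ≤ n - 1) :
    (P n k : ℝ) <
      (Nat.choose n k : ℝ) * ∏' j : ℕ, (1 - ((k : ℝ) / n) ^ (j + 1))⁻¹ := by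
  have hkn : k < n := by omega
  have hn : (0 : ℝ) < n := by exact_mod_cast (Nat.zero_lt_one.trans_le hk1).trans hkn
  have hx0 : 0 < (k : ℝ) / n := div_pos (by exact_mod_cast hk1) hn
  have hx1 : (k : ℝ) / n < 1 := (div_lt_one hn).2 (by exact_mod_cast hkn)
  have hC : (0 : ℝ) < n.choose k := by exact_mod_cast Nat.choose_pos hkn.le
  calc (P n k : ℝ)
      ≤ n.choose k * ∑ j ∈ range (k + 1), (partitionFn j : ℝ) * ((k : ℝ) / n) ^ j :=
        P_le_choose_mul_sum hkn.le
    _ ≤ n.choose k * ∏ j ∈ range (k + 1), (1 - ((k : ℝ) / n) ^ (j + 1))⁻¹ := by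
        gcongr
        exact sum_partitionFn_mul_pow_le_prod hx0.le hx1 (k + 1)
    _ < n.choose k * ∏' j : ℕ, (1 - ((k : ℝ) / n) ^ (j + 1))⁻¹ :=
        mul_lt_mul_of_pos_left (prod_range_lt_tprod_inv_one_sub_pow hx0 hx1 (k + 1)) hC
end

section
/- For all n ≥ 1, the central-type binomial coefficient satisfies C(n, ⌊(n+3)/2⌋) < 2^n / √(πn/2). -/
open Real Real.Wallis Filter

lemma key_identity (m : ℕ) :
    ((Nat.choose (2 * m) m : ℝ)) ^ 2 * ((2 * m + 1) * W m) = 16 ^ m := by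
  have hc : (Nat.choose (2 * m) m) * m.factorial * m.factorial = (2 * m).factorial := by
    have h := Nat.choose_mul_factorial_mul_factorial (show m ≤ 2 * m by omega)
    simpa [show 2 * m - m = m from by omega] using h
  have hc' : ((Nat.choose (2 * m) m : ℝ)) * m.factorial * m.factorial = (2 * m).factorial := by
    exact_mod_cast hc
  have hf : (0 : ℝ) < (m.factorial : ℝ) := by positivity
  have hf2 : (0 : ℝ) < ((2 * m).factorial : ℝ) := by positivity
  have h2 : (0 : ℝ) < 2 * (m : ℝ) + 1 := by positivity
  rw [W_eq_factorial_ratio]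
  have h16 : (16 : ℝ) ^ m = 2 ^ (4 * m) := by
    rw [pow_mul]; norm_num
  rw [h16]
  field_simp
  rw [← hc']
  ring

lemma central_sq_lt (m : ℕ) :
    ((Nat.choose (2 * m) m : ℝ)) ^ 2 * (Real.pi * m) < 16 ^ m := by
  have hW := le_W m
  have hWpos := W_pos m
  have hlt : Real.pi * m < (2 * m + 1) * W m := by
    have h1 : ((2 : ℝ) * m + 1) * ((2 * m + 1) / (2 * m + 2) * (π / 2)) ≤
        (2 * m + 1) * W m := by
      have : (0 : ℝ) < 2 * m + 1 := by positivity
      nlinarith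
    have h2 : Real.pi * m < ((2 : ℝ) * m + 1) * ((2 * m + 1) / (2 * m + 2) * (π / 2)) := by
      rw [div_mul_eq_mul_div, mul_div_assoc', lt_div_iff₀ (by positivity : (0:ℝ) < 2 * m + 2)]
      nlinarith [Real.pi_pos]
    linarith
  have hchoose : (0 : ℝ) < (Nat.choose (2 * m) m : ℝ) := by
    exact_mod_cast Nat.cast_pos.mpr (Nat.choose_pos (by omega))
  calc ((Nat.choose (2 * m) m : ℝ)) ^ 2 * (Real.pi * m)
      < ((Nat.choose (2 * m) m : ℝ)) ^ 2 * ((2 * m + 1) * W m) :=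
        mul_lt_mul_of_pos_left hlt (pow_pos hchoose 2)
    _ = 16 ^ m := key_identity m

lemma central_lt (m : ℕ) (hm : 1 ≤ m) :
    (Nat.choose (2 * m) m : ℝ) < 4 ^ m / Real.sqrt (Real.pi * m) := by
  have hpm : (0 : ℝ) < Real.pi * m := by
    have : (0 : ℝ) < (m : ℝ) := by exact_mod_cast hm
    positivity
  rw [lt_div_iff₀ (Real.sqrt_pos.mpr hpm)]
  have hnn : (0 : ℝ) ≤ (Nat.choose (2 * m) m : ℝ) * Real.sqrt (Real.pi * m) := by positivity
  have h4 : (0 : ℝ) < (4 : ℝ) ^ m := by positivity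
  nlinarith [central_sq_lt m, Real.sq_sqrt hpm.le, Real.sqrt_nonneg (Real.pi * m),
    sq_nonneg ((Nat.choose (2 * m) m : ℝ) * Real.sqrt (Real.pi * m) - 4 ^ m),
    show ((16 : ℝ)) ^ m = 4 ^ m * 4 ^ m by rw [← mul_pow]; norm_num]

theorem central_choose_bound (n : ℕ) (hn : 1 ≤ n) :
    (Nat.choose n ((n + 3) / 2) : ℝ) < 2 ^ n / Real.sqrt (Real.pi * n / 2) := by
  rcases Nat.even_or_odd n with ⟨m, hm⟩ | ⟨m, hm⟩
  · -- n = 2m, m ≥ 1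
    subst hm
    have hm1 : 1 ≤ m := by omega
    have hk : (m + m + 3) / 2 = m + 1 := by omega
    rw [hk]
    have hle : Nat.choose (m + m) (m + 1) ≤ Nat.choose (m + m) m := by
      have := Nat.choose_le_middle (m + 1) (m + m)
      have h2 : (m + m) / 2 = m := by omega
      rwa [h2] at this
    have hle' : (Nat.choose (m + m) (m + 1) : ℝ) ≤ (Nat.choose (m + m) m : ℝ) := by
      exact_mod_cast hle
    have heq : Real.pi * (↑(m + m) : ℝ) / 2 = Real.pi * m := by
      push_cast; ring
    rw [heq]
    have h2m : (2 : ℝ) ^ (m + m) = 4 ^ m := by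
      rw [show m + m = 2 * m by ring, pow_mul]; norm_num
    rw [h2m]
    calc (Nat.choose (m + m) (m + 1) : ℝ) ≤ (Nat.choose (m + m) m : ℝ) := hle'
      _ = (Nat.choose (2 * m) m : ℝ) := by rw [two_mul]
      _ < 4 ^ m / Real.sqrt (Real.pi * m) := central_lt m hm1
  · -- n = 2m + 1
    subst hm
    have hk : (2 * m + 1 + 3) / 2 = m + 2 := by omega
    rw [hk]
    have hle : Nat.choose (2 * m + 1) (m + 2) ≤ Nat.choose (2 * m + 1) m := by
      have := Nat.choose_le_middle (m + 2) (2 * m + 1)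
      have h2 : (2 * m + 1) / 2 = m := by omega
      rwa [h2] at this
    -- choose(2m+1, m) = choose(2m+2, m+1) / 2
    have hdouble : 2 * Nat.choose (2 * m + 1) m = Nat.choose (2 * (m + 1)) (m + 1) := by
      have h1 : Nat.choose (2 * m + 2) (m + 1) =
          Nat.choose (2 * m + 1) m + Nat.choose (2 * m + 1) (m + 1) :=
        Nat.choose_succ_succ (2 * m + 1) m
      have h2 : Nat.choose (2 * m + 1) (m + 1) = Nat.choose (2 * m + 1) m := by
        have h := Nat.choose_symm (show m + 1 ≤ 2 * m + 1 by omega)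
        rw [show 2 * m + 1 - (m + 1) = m from by omega] at h
        exact h.symm
      have h3 : Nat.choose (2 * (m + 1)) (m + 1) = Nat.choose (2 * m + 2) (m + 1) := by
        rfl
      omega
    have hcl := central_lt (m + 1) (by omega)
    have hreal : (Nat.choose (2 * m + 1) m : ℝ) <
        4 ^ (m + 1) / (2 * Real.sqrt (Real.pi * (m + 1))) := by
      have h2 : (2 : ℝ) * (Nat.choose (2 * m + 1) m : ℝ) =
          (Nat.choose (2 * (m + 1)) (m + 1) : ℝ) := by exact_mod_cast hdouble
      have hs : (0 : ℝ) < Real.sqrt (Real.pi * ((m : ℝ) + 1)) := by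
        apply Real.sqrt_pos.mpr; positivity
      have hcl' := hcl
      push_cast at hcl'
      rw [lt_div_iff₀ hs] at hcl'
      rw [lt_div_iff₀ (by positivity : (0 : ℝ) < 2 * Real.sqrt (Real.pi * ((m : ℝ) + 1)))]
      push_cast at h2 ⊢
      nlinarith
    -- sqrt(π(2m+1)/2) < sqrt(π(m+1))
    have hsqlt : Real.sqrt (Real.pi * (↑(2 * m + 1) : ℝ) / 2) < Real.sqrt (Real.pi * (m + 1)) := by
      apply Real.sqrt_lt_sqrt (by positivity)
      push_cast
      nlinarith [Real.pi_pos]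
    have hspos : (0 : ℝ) < Real.sqrt (Real.pi * (↑(2 * m + 1) : ℝ) / 2) := by
      apply Real.sqrt_pos.mpr
      have : (0 : ℝ) < (↑(2 * m + 1) : ℝ) := by positivity
      positivity
    have hle' : (Nat.choose (2 * m + 1) (m + 2) : ℝ) ≤ (Nat.choose (2 * m + 1) m : ℝ) := by
      exact_mod_cast hle
    have hpow : (2 : ℝ) ^ (2 * m + 1) = 4 ^ (m + 1) / 2 := by
      rw [pow_succ, pow_mul]; norm_num; ring
    calc (Nat.choose (2 * m + 1) (m + 2) : ℝ)
        ≤ (Nat.choose (2 * m + 1) m : ℝ) := hle'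
      _ < 4 ^ (m + 1) / (2 * Real.sqrt (Real.pi * (m + 1))) := hreal
      _ ≤ 4 ^ (m + 1) / (2 * Real.sqrt (Real.pi * (↑(2 * m + 1) : ℝ) / 2)) := by
          apply div_le_div_of_nonneg_left (by positivity) (by positivity)
          linarith
      _ = 2 ^ (2 * m + 1) / Real.sqrt (Real.pi * (↑(2 * m + 1) : ℝ) / 2) := by
          rw [hpow]; field_simp
end

section
/- Let α = π√(2/3). Assuming the bound p(m) < (π/√(6m))·e^{α√m} for all m ≥ 1, we have p(n-1, n-1) < e^{α√n} for all n ≥ 1, and p(n, n-1) < √n · e^{α√n} for all n ≥ 1. -/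
/-!
Write `α = π √(2/3)`; then `π / √(6m) = α / (2√m)`, so the hypothesis says that `p(m)` lies below
the derivative of `x ↦ e^{α√x}` at `m`. For `s = √m`, `t = √(m+1)` and `d = t - s = 1/(t+s)`, the
bound `e^{αd} ≥ 1 + αd + (αd)²/2` gives the discrete estimates
`α/(2s) e^{αs} ≤ e^{αt} - e^{αs}` and, as `α ≥ 5/2`, `s e^{αs} + e^{αt} ≤ t e^{αt}`.
Since `P(n-1, n-1) = ∑_{j<n} p(j)` and `P(n, n-1) = ∑_{j<n} (n-j) p(j)`, both bounds follow by
induction on `n`.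
-/

open Real Finset

section Steps

variable {a s t : ℝ}

lemma sub_pos_and_sub_mul_add_eq_one (hs : 0 < s) (ht : 0 ≤ t) (hst : t ^ 2 = s ^ 2 + 1) :
    0 < t - s ∧ (t - s) * (t + s) = 1 := by
  refine ⟨?_, by linear_combination hst⟩
  nlinarith

lemma div_two_mul_exp_le_exp_sub_exp (hs : 0 < s) (has : 1 ≤ a * s) (ht : 0 ≤ t)
    (hst : t ^ 2 = s ^ 2 + 1) :
    a / (2 * s) * exp (a * s) ≤ exp (a * t) - exp (a * s) := by
  obtain ⟨hd, hdu⟩ := sub_pos_and_sub_mul_add_eq_one hs ht hst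
  set d := t - s with hd_def
  have ha : 0 < a := pos_of_mul_pos_left (one_pos.trans_le has) hs.le
  have hexp := quadratic_le_exp_of_nonneg (mul_pos ha hd).le
  -- `2 s d = 1 - d²` turns the claim into `a ≤ a + a d² (a s - 1)`
  have key : a / (2 * s) ≤ exp (a * d) - 1 := by
    rw [div_le_iff₀ (by positivity)]
    nlinarith [mul_nonneg (mul_nonneg ha.le (sq_nonneg d)) (sub_nonneg.2 has)]
  calc a / (2 * s) * exp (a * s) ≤ (exp (a * d) - 1) * exp (a * s) := by gcongr
    _ = exp (a * t) - exp (a * s) := by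
      rw [sub_mul, ← exp_add, hd_def]; ring_nf

lemma one_add_le_one_sub_mul_exp {d : ℝ} (ha : 5 / 2 ≤ a) (hd₀ : 0 ≤ d) (hd : d ≤ 1 / 2) :
    1 + d ≤ (1 - d) * exp (a * d) := by
  have hexp := quadratic_le_exp_of_nonneg (mul_nonneg (by linarith) hd₀ : 0 ≤ a * d)
  have hg : 0 ≤ (a - 2) + (a ^ 2 / 2 - a) * d - a ^ 2 / 2 * d ^ 2 := by
    nlinarith [mul_nonneg (sub_nonneg.2 ha) hd₀, mul_nonneg (sub_nonneg.2 ha) (sub_nonneg.2 hd),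
      mul_nonneg hd₀ (sub_nonneg.2 hd),
      mul_nonneg (mul_nonneg hd₀ (sub_nonneg.2 hd)) (sub_nonneg.2 ha)]
  calc 1 + d ≤ (1 - d) * (1 + a * d + (a * d) ^ 2 / 2) := by nlinarith [mul_nonneg hd₀ hg]
    _ ≤ (1 - d) * exp (a * d) := by gcongr; linarith

lemma mul_exp_add_exp_le_mul_exp (ha : 5 / 2 ≤ a) (hs : 1 ≤ s) (ht : 0 ≤ t)
    (hst : t ^ 2 = s ^ 2 + 1) :
    s * exp (a * s) + exp (a * t) ≤ t * exp (a * t) := by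
  obtain ⟨hd, hdu⟩ := sub_pos_and_sub_mul_add_eq_one (one_pos.trans_le hs) ht hst
  set d := t - s with hd_def
  have hd2 : d ≤ 1 / 2 := by nlinarith
  have h := one_add_le_one_sub_mul_exp ha hd.le hd2
  -- `2 d s = (1 - d) (1 + d)` and `2 d (t - 1) = (1 - d)²`
  have key : s ≤ (t - 1) * exp (a * d) := by
    have h2 : (1 - d) * (1 + d) ≤ (1 - d) * ((1 - d) * exp (a * d)) :=
      mul_le_mul_of_nonneg_left h (by linarith)
    nlinarith
  have hts : exp (a * t) = exp (a * s) * exp (a * d) := by rw [← exp_add, hd_def]; ring_nf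
  rw [hts]
  nlinarith [exp_pos (a * s)]

end Steps

lemma sqrt_add_one_sq_eq {x : ℝ} (hx : 0 ≤ x) : √(x + 1) ^ 2 = √x ^ 2 + 1 := by
  rw [sq_sqrt hx, sq_sqrt (by linarith)]

section Sums

variable {a : ℝ} {q : ℕ → ℝ}

lemma sum_range_lt_exp_sqrt (ha : 1 ≤ a) (hq0 : q 0 ≤ 1)
    (hq : ∀ m : ℕ, 1 ≤ m → q m < a / (2 * √m) * exp (a * √m)) {n : ℕ} (hn : 1 ≤ n) :
    ∑ j ∈ range n, q j < exp (a * √n) := by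
  induction n, hn using Nat.le_induction with
  | base => simpa using hq0.trans_lt (one_lt_exp_iff.2 (by linarith))
  | succ n hn ih =>
    have hs : 1 ≤ √(n : ℝ) := one_le_sqrt.2 (by exact_mod_cast hn)
    have step := div_two_mul_exp_le_exp_sub_exp (a := a) (by positivity) (by nlinarith)
      (sqrt_nonneg _) (sqrt_add_one_sq_eq (Nat.cast_nonneg n))
    rw [sum_range_succ]
    push_cast
    linarith [hq n hn]

lemma sum_range_sub_mul_lt_sqrt_mul_exp_sqrt (ha : 5 / 2 ≤ a) (hq0 : q 0 ≤ 1)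
    (hq : ∀ m : ℕ, 1 ≤ m → q m < a / (2 * √m) * exp (a * √m)) {n : ℕ} (hn : 1 ≤ n) :
    ∑ j ∈ range n, ((n : ℝ) - j) * q j < √n * exp (a * √n) := by
  induction n, hn using Nat.le_induction with
  | base => simpa using hq0.trans_lt (one_lt_exp_iff.2 (by linarith))
  | succ n hn ih =>
    have hsplit : ∑ j ∈ range (n + 1), (((n + 1 : ℕ) : ℝ) - j) * q j =
        ∑ j ∈ range n, ((n : ℝ) - j) * q j + ∑ j ∈ range (n + 1), q j := by
      have hlast : ∑ j ∈ range n, ((n : ℝ) - j) * q j =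
          ∑ j ∈ range (n + 1), ((n : ℝ) - j) * q j := by
        simp [sum_range_succ]
      rw [hlast, ← sum_add_distrib]
      refine sum_congr rfl fun j _ => ?_
      push_cast
      ring
    have hS := sum_range_lt_exp_sqrt (by linarith) hq0 hq (Nat.le_add_left 1 n)
    have step := mul_exp_add_exp_le_mul_exp ha (one_le_sqrt.2 (by exact_mod_cast hn))
      (sqrt_nonneg _) (sqrt_add_one_sq_eq (Nat.cast_nonneg n))
    rw [hsplit]
    push_cast at hS ⊢
    linarith

end Sums

lemma five_halves_le_pi_mul_sqrt_two_thirds : 5 / 2 ≤ π * √(2 / 3) := by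
  have h : (0.8 : ℝ) ≤ √(2 / 3) := le_sqrt_of_sq_le (by norm_num)
  nlinarith [pi_gt_d2]

lemma pi_div_sqrt_six_mul (x : ℝ) : π / √(6 * x) = π * √(2 / 3) / (2 * √x) := by
  have h : √6 * √(2 / 3) = 2 := by
    rw [← sqrt_mul (by norm_num), show (6 * (2 / 3) : ℝ) = 2 ^ 2 by norm_num, sqrt_sq zero_le_two]
  rw [sqrt_mul (by norm_num), div_mul_eq_div_div, div_mul_eq_div_div]
  congr 1
  field_simp
  exact h.symm

lemma P_pred_pred_eq_sum {n : ℕ} (hn : 1 ≤ n) :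
    P (n - 1) (n - 1) = ∑ j ∈ range n, partitionFn j := by
  obtain ⟨m, rfl⟩ := Nat.exists_eq_add_of_le' hn
  simp [P]

lemma cast_P_pred_right_eq_sum {n : ℕ} (hn : 1 ≤ n) :
    (P n (n - 1) : ℝ) = ∑ j ∈ range n, ((n : ℝ) - j) * partitionFn j := by
  obtain ⟨m, rfl⟩ := Nat.exists_eq_add_of_le' hn
  simp only [P, Nat.add_sub_cancel]
  push_cast
  refine sum_congr rfl fun j hj => ?_
  have hjm : j ≤ m := Nat.lt_succ_iff.1 (mem_range.1 hj)
  rw [show m + 1 - j = m - j + 1 by omega, Nat.choose_succ_self_right]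
  push_cast [Nat.cast_sub hjm]
  ring

theorem P_filiform_bounds
    (hp : ∀ m : ℕ, 1 ≤ m →
      (partitionFn m : ℝ) <
        Real.pi / Real.sqrt (6 * m) * Real.exp (Real.pi * Real.sqrt (2 / 3) * Real.sqrt m)) :
    (∀ n : ℕ, 1 ≤ n →
      (P (n - 1) (n - 1) : ℝ) < Real.exp (Real.pi * Real.sqrt (2 / 3) * Real.sqrt n)) ∧
    (∀ n : ℕ, 1 ≤ n →
      (P n (n - 1) : ℝ) <
        Real.sqrt n * Real.exp (Real.pi * Real.sqrt (2 / 3) * Real.sqrt n)) := by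
  have ha := five_halves_le_pi_mul_sqrt_two_thirds
  have hp0 : (partitionFn 0 : ℝ) ≤ 1 := by simp [partitionFn]
  simp only [pi_div_sqrt_six_mul] at hp
  refine ⟨fun n hn => ?_, fun n hn => ?_⟩
  · rw [P_pred_pred_eq_sum hn]
    push_cast
    exact sum_range_lt_exp_sqrt (by linarith) hp0 hp hn
  · rw [cast_P_pred_right_eq_sum hn]
    exact sum_range_sub_mul_lt_sqrt_mul_exp_sqrt ha hp0 hp hn
end
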